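/- For integers n ≥ 4 and 3 ≤ i ≤ n-1, the product over integers j with 3 ≤ j ≤ n and j ≠ i of j(j-1)/((j+i-1)(j-i)) equals (-1)^{i-1} (2i-1)(i+1)(i-2)(n!)² / (2n (n-i)! (n+i-1)!). -/

import Mathlib

/-!
Common definitions: rooted unlabeled trees on `n` vertices, the growth/pruning
coefficients `n(t,t')` and `m(t,t')`, the measure `π_n`, the up/down transition
probabilities, the down-up and up-down Markov chains, and separation distance.

A rooted tree is represented as `PreTree.node cs` where `cs` is the list of
subtrees of the root's children.  An *unlabeled* rooted tree is represented by
its canonical representative (children recursively sorted by an injective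
encoding into `ℕ`), and `trees n` is the finite set of canonical rooted trees
on `n` vertices.
-/

namespace RootedTreeChain

inductive PreTree : Type where
  | node : List PreTree → PreTree

namespace PreTree

/- Number of vertices. -/
mutual
  def size : PreTree → ℕ
    | .node cs => 1 + sizeList cs
  def sizeList : List PreTree → ℕ
    | [] => 0
    | t :: ts => size t + sizeList ts
end

mutual
def deq : (a b : PreTree) → Decidable (a = b)
  | .node cs, .node ds =>
    match deqList cs ds with
    | isTrue h => isTrue (by rw [h])
    | isFalse h => isFalse (by intro hh; cases hh; exact h rfl)
def deqList : (as bs : List PreTree) → Decidable (as = bs)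
  | [], [] => isTrue rfl
  | [], _ :: _ => isFalse (by simp)
  | _ :: _, [] => isFalse (by simp)
  | a :: as, b :: bs =>
    match deq a b, deqList as bs with
    | isTrue h1, isTrue h2 => isTrue (by rw [h1, h2])
    | isFalse h1, _ => isFalse (by intro hh; injection hh; contradiction)
    | _, isFalse h2 => isFalse (by intro hh; injection hh; contradiction)
end

instance : DecidableEq PreTree := deq

/- An injective encoding of trees into `ℕ`, used only to sort children
so that each unlabeled rooted tree has a unique canonical representative. -/
mutual
  def enc : PreTree → ℕ
    | .node cs => encList cs
  def encList : List PreTree → ℕ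
    | [] => 0
    | t :: ts => Nat.pair (enc t) (encList ts) + 1
end

/- Canonical representative of the isomorphism class of a rooted tree:
recursively sort the children by their encoding. -/
mutual
  def canon : PreTree → PreTree
    | .node cs => .node ((canonList cs).mergeSort (fun a b => enc a ≤ enc b))
  def canonList : List PreTree → List PreTree
    | [] => []
    | t :: ts => canon t :: canonList ts
end

/-- The one-vertex rooted tree `•`. -/
def leaf : PreTree := .node []

/- The addresses (paths of child indices from the root) of all vertices. -/
mutual
  def positions : PreTree → List (List ℕ)
    | .node cs => [] :: positionsList 0 cs
  def positionsList : ℕ → List PreTree → List (List ℕ)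
    | _, [] => []
    | i, t :: ts => (positions t).map (fun p => i :: p) ++ positionsList (i + 1) ts
end

/- The addresses of all terminal vertices (vertices with no outgoing edge). -/
mutual
  def termPositions : PreTree → List (List ℕ)
    | .node [] => [[]]
    | .node (c :: cs) => termPositionsList 0 (c :: cs)
  def termPositionsList : ℕ → List PreTree → List (List ℕ)
    | _, [] => []
    | i, t :: ts => (termPositions t).map (fun p => i :: p) ++ termPositionsList (i + 1) ts
end

/- Attach a new terminal vertex by an edge to the vertex at address `p`. -/
mutual
  def addLeafAt : PreTree → List ℕ → PreTree
    | .node cs, [] => .node (cs ++ [leaf])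
    | .node cs, i :: p => .node (addLeafAtList cs i p)
  def addLeafAtList : List PreTree → ℕ → List ℕ → List PreTree
    | [], _, _ => []
    | t :: ts, 0, p => addLeafAt t p :: ts
    | t :: ts, i + 1, p => t :: addLeafAtList ts i p
end

/- Remove the (terminal) vertex at address `p` together with the edge into it. -/
mutual
  def removeAt : PreTree → List ℕ → PreTree
    | .node cs, [] => .node cs
    | .node cs, [i] => .node (cs.eraseIdx i)
    | .node cs, i :: p => .node (removeAtList cs i p)
  def removeAtList : List PreTree → ℕ → List ℕ → List PreTree
    | [], _, _ => []
    | t :: ts, 0, p => removeAt t p :: ts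
    | t :: ts, i + 1, p => t :: removeAtList ts i p
end

/-- For `s ↗ t` (and more generally any `s, t` with `size t = size s + 1`),
`ncoef s t` is `n(s,t)`: the number of vertices of `s` to which a new edge can
be added to obtain `t`. -/
def ncoef (s t : PreTree) : ℕ :=
  ((positions s).filter (fun p => canon (addLeafAt s p) = t)).length

/-- For `s ↗ t`, `mcoef s t` is `m(s,t)`: the number of edges of `t` (into a
terminal vertex) which when removed give `s`. -/
def mcoef (s t : PreTree) : ℕ :=
  ((termPositions t).filter (fun p => canon (removeAt t p) = s)).length

/-- The list of all (canonical representatives of) rooted unlabeled trees on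
`n` vertices: every tree on `n+1 ≥ 2` vertices is obtained by attaching a new
terminal vertex to a tree on `n` vertices. -/
def treeList : ℕ → List PreTree
  | 0 => []
  | 1 => [leaf]
  | n + 2 =>
      ((treeList (n + 1)).flatMap
        (fun t => (positions t).map (fun p => canon (addLeafAt t p)))).dedup

/-- The set `𝒯_n` of rooted unlabeled trees on `n` vertices. -/
def trees (n : ℕ) : Finset PreTree := (treeList n).toFinset

/-- `T_n = |𝒯_n|`, the number of rooted unlabeled trees on `n` vertices. -/
def T (n : ℕ) : ℕ := (trees n).card

/-- Generalized growth coefficients: `nGen k t t'` is the coefficient `n(t,t')`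
of `t'` in `G^k(t)` (for `size t' = size t + k`). -/
def nGen : ℕ → PreTree → PreTree → ℕ
  | 0, t, t' => if t = t' then 1 else 0
  | k + 1, t, t' => ((treeList (t.size + k)).map (fun s => nGen k t s * ncoef s t')).sum

/-- Generalized pruning coefficients: `mGen k t t'` is the coefficient `m(t,t')`
of `t` in `P^k(t')` (for `size t' = size t + k`). -/
def mGen : ℕ → PreTree → PreTree → ℕ
  | 0, t, t' => if t = t' then 1 else 0
  | k + 1, t, t' => ((treeList (t'.size - 1)).map (fun s => mcoef s t' * mGen k t s)).sum

/-- `m(t) = m(•,t)`, the number of ways to take `t` apart by sequentially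
removing terminal edges. -/
def mWt (t : PreTree) : ℕ := mGen (t.size - 1) leaf t

/-- `n(t) = n(•,t)`, the number of ways to build `t` up from `•`. -/
def nWt (t : PreTree) : ℕ := nGen (t.size - 1) leaf t

/-- The measure `π_n(t) = m(t) n(t) / ∏_{i=2}^n C(i,2)` on `𝒯_n`. -/
def piM (n : ℕ) (t : PreTree) : ℚ :=
  (mWt t * nWt t : ℚ) / ∏ i ∈ Finset.Icc 2 n, (Nat.choose i 2 : ℚ)

/-- Upward transition probability `P_u(s,t) = m(s,t) n(t) / (C(n,2) n(s))`
from `s ∈ 𝒯_{n-1}` to `t ∈ 𝒯_n`. -/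
def Pu (n : ℕ) (s t : PreTree) : ℚ :=
  (mcoef s t : ℚ) * (nWt t : ℚ) / ((Nat.choose n 2 : ℚ) * (nWt s : ℚ))

/-- Downward transition probability `P_d(t,s) = m(s,t) m(s) / m(t)`
from `t ∈ 𝒯_n` to `s ∈ 𝒯_{n-1}`. -/
def Pd (t s : PreTree) : ℚ :=
  (mcoef s t : ℚ) * (mWt s : ℚ) / (mWt t : ℚ)

/-- The down-up Markov chain on `𝒯_n`:
`K(t,t') = Σ_{s : s ↗ t, s ↗ t'} P_d(t,s) P_u(s,t')`.  (The sum may be taken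
over all `s ∈ 𝒯_{n-1}` since the summand vanishes unless `s ↗ t` and `s ↗ t'`.) -/
def K (n : ℕ) (t t' : PreTree) : ℚ :=
  ∑ s ∈ trees (n - 1), Pd t s * Pu n s t'

/-- `r`-step transition probabilities `K^r(t,t')` of the down-up chain. -/
def Kpow (n : ℕ) : ℕ → PreTree → PreTree → ℚ
  | 0, t, t' => if t = t' then 1 else 0
  | r + 1, t, t' => ∑ s ∈ trees n, K n t s * Kpow n r s t'

/-- The up-down Markov chain on `𝒯_n`:
`DU_n(t,t') = Σ_{s : s ⋗ t, s ⋗ t'} P_u(t,s) P_d(s,t')`. -/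
def DU (n : ℕ) (t t' : PreTree) : ℚ :=
  ∑ s ∈ trees (n + 1), Pu (n + 1) t s * Pd s t'

/-- `r`-step transition probabilities of the up-down chain. -/
def DUpow (n : ℕ) : ℕ → PreTree → PreTree → ℚ
  | 0, t, t' => if t = t' then 1 else 0
  | r + 1, t, t' => ∑ s ∈ trees n, DU n t s * DUpow n r s t'

/-- Maximal separation distance `s^*(r) = max_{t,t' ∈ 𝒯_n} [1 - K^r(t,t')/π_n(t')]`
of the down-up chain on `𝒯_n`. -/
noncomputable def sStar (n r : ℕ) : ℝ :=
  sSup {x : ℝ | ∃ t ∈ trees n, ∃ t' ∈ trees n,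
    x = 1 - (Kpow n r t t' : ℝ) / (piM n t' : ℝ)}

/-- Maximal separation distance of the up-down chain on `𝒯_n`. -/
noncomputable def sStarDU (n r : ℕ) : ℝ :=
  sSup {x : ℝ | ∃ t ∈ trees n, ∃ t' ∈ trees n,
    x = 1 - (DUpow n r t t' : ℝ) / (piM n t' : ℝ)}

/-- The path on `n` vertices (rooted at an end): the unique rooted tree on
`n ≥ 2` vertices with exactly one terminal vertex. -/
def pathTree : ℕ → PreTree
  | 0 => leaf
  | 1 => leaf
  | n + 2 => .node [pathTree (n + 1)]

/-- The star on `n` vertices (rooted at the center): the unique rooted tree on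
`n` vertices with `n-1` terminal vertices. -/
def starTree (n : ℕ) : PreTree := .node (List.replicate (n - 1) leaf)


/- The order of the symmetry group `SG(t) = ∏_{v ∈ t} SG(t,v)`, where for a
vertex `v` with children `v_1, …, v_k`, `SG(t,v)` is generated by the
permutations exchanging isomorphic subtrees rooted at the `v_i`. -/
mutual
  def sgOrder : PreTree → ℕ
    | .node cs => sgOrderList cs *
        ((canonList cs).dedup.map (fun c => Nat.factorial ((canonList cs).count c))).prod
  def sgOrderList : List PreTree → ℕ
    | [] => 1
    | t :: ts => sgOrder t * sgOrderList ts
end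

/- `hProd t = ∏_{v ∈ t} h(v)`, the product over all vertices `v` of `t` of the
number `h(v)` of vertices of the subtree rooted at `v`. -/
mutual
  def hProd : PreTree → ℕ
    | .node cs => size (.node cs) * hProdList cs
  def hProdList : List PreTree → ℕ
    | [] => 1
    | t :: ts => hProd t * hProdList ts
end

/-- The matrix entry of `G P : ℂ𝒯_n → ℂ𝒯_n`: the coefficient of `t'` in `G(P(t))`. -/
def gpEntry (n : ℕ) (t t' : PreTree) : ℕ :=
  ∑ s ∈ trees (n - 1), mcoef s t * ncoef s t'

/-- The matrix entry of `(G P)^l : ℂ𝒯_n → ℂ𝒯_n`: the coefficient of `t'` in `(GP)^l(t)`. -/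
def gpPow (n : ℕ) : ℕ → PreTree → PreTree → ℕ
  | 0, t, t' => if t = t' then 1 else 0
  | l + 1, t, t' => ∑ u ∈ trees n, gpPow n l t u * gpEntry n u t'

end PreTree

open Finset Nat

/-! Removing `j = i` splits the range into `(2, i - 1]` and `(i, n]`. On each piece the four
factors `j`, `j - 1`, `j + i - 1`, `j - i` have products that are ratios of factorials; below `i`
the factors `j - i` are negative and contribute the sign `(-1) ^ (i - 3)`. -/

theorem natCast_factorial_eq_mul_factorial_pred {R : Type*} [Semiring R] {m : ℕ} (hm : m ≠ 0) :
    (m ! : R) = (m : R) * (m - 1)! := by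
  rw [← Nat.cast_mul, mul_factorial_pred hm]

def eigenRatio {K : Type*} [DivisionRing K] (i j : ℕ) : K :=
  j * (j - 1) / ((j + i - 1) * (j - i))

section
variable {K : Type*} [Field K] [CharZero K]

theorem prod_Ioc_natCast_add_sub {a b : ℕ} (c d : ℕ) (hd : d ≤ a + c) (hab : a ≤ b) :
    ∏ j ∈ Ioc a b, ((j : K) + c - d) = (b + c - d)! / (a + c - d)! := by
  induction b, hab using Nat.le_induction with
  | base => rw [Ioc_self, prod_empty, div_self (by exact_mod_cast factorial_ne_zero _)]
  | succ b hab ih =>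
    rw [prod_Ioc_succ_top hab, ih, show b + 1 + c - d = (b + c - d) + 1 by omega,
      factorial_succ]
    push_cast [Nat.cast_sub (show d ≤ b + c by omega)]
    ring

theorem prod_Ioc_natCast_sub_of_lt {a b c : ℕ} (hab : a ≤ b) (hbc : b < c) :
    ∏ j ∈ Ioc a b, ((j : K) - c) = (-1) ^ (b - a) * (c - a - 1)! / (c - b - 1)! := by
  induction b, hab using Nat.le_induction with
  | base =>
    rw [Ioc_self, prod_empty, tsub_self, pow_zero, one_mul,
      div_self (by exact_mod_cast factorial_ne_zero _)]
  | succ b hab ih =>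
    have hcast : ((c - (b + 1) - 1 + 1 : ℕ) : K) = c - (b + 1) := by
      rw [Nat.sub_add_cancel (by omega), Nat.cast_sub hbc.le]; push_cast; ring
    have hne : (c : K) - (b + 1) ≠ 0 := by
      rw [← hcast]; exact_mod_cast Nat.succ_ne_zero (c - (b + 1) - 1)
    rw [prod_Ioc_succ_top hab, ih (by omega), show c - b - 1 = (c - (b + 1) - 1) + 1 by omega,
      factorial_succ, show b + 1 - a = (b - a) + 1 by omega, pow_succ, Nat.cast_mul, hcast]
    field_simp
    push_cast
    ring

theorem prod_eigenRatio_Ioc_two_sub_one {i : ℕ} (hi : 3 ≤ i) :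
    ∏ j ∈ Ioc 2 (i - 1), (eigenRatio i j : K)
      = (-1) ^ (i - 1) * ((i + 1) * (i - 2) * (i - 1)! * i !) / (2 * (2 * i - 2)!) := by
  have hj : ∏ j ∈ Ioc 2 (i - 1), (j : K) = (i - 1)! / 2 := by
    simpa using prod_Ioc_natCast_add_sub (K := K) 0 0 (a := 2) (b := i - 1) (zero_le _) (by omega)
  have hj1 : ∏ j ∈ Ioc 2 (i - 1), ((j : K) - 1) = (i - 2)! := by
    simpa [Nat.sub_sub] using
      prod_Ioc_natCast_add_sub (K := K) 0 1 (a := 2) (b := i - 1) (by omega) (by omega)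
  have hji : ∏ j ∈ Ioc 2 (i - 1), ((j : K) + i - 1) = (2 * i - 2)! / (i + 1)! := by
    have := prod_Ioc_natCast_add_sub (K := K) i 1 (a := 2) (b := i - 1) (by omega) (by omega)
    rwa [show i - 1 + i - 1 = 2 * i - 2 by omega, show 2 + i - 1 = i + 1 by omega,
      Nat.cast_one] at this
  have hij : ∏ j ∈ Ioc 2 (i - 1), ((j : K) - i) = (-1) ^ (i - 1) * (i - 3)! := by
    rw [prod_Ioc_natCast_sub_of_lt (by omega) (by omega), show i - (i - 1) - 1 = 0 by omega,
      show i - 2 - 1 = i - 3 by omega, show i - 1 = i - 1 - 2 + 2 by omega, pow_add]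
    simp
  simp only [eigenRatio, prod_div_distrib, prod_mul_distrib]
  rw [hj, hj1, hji, hij, natCast_factorial_eq_mul_factorial_pred (m := i - 2) (by omega),
    show i - 2 - 1 = i - 3 by omega, factorial_succ, Nat.cast_sub (by omega : 2 ≤ i)]
  have h3 : ((i - 3)! : K) ≠ 0 := by exact_mod_cast factorial_ne_zero _
  have hsign : ((-1 : K) ^ (i - 1)) ^ 2 = 1 := by rw [← pow_mul, pow_mul', neg_one_sq, one_pow]
  field_simp
  rw [hsign]
  push_cast
  ring

theorem prod_eigenRatio_Ioc_of_le {i n : ℕ} (hi : 1 ≤ i) (hin : i ≤ n) :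
    ∏ j ∈ Ioc i n, (eigenRatio i j : K)
      = n ! * (n - 1)! * (2 * i - 1)! / (i ! * (i - 1)! * (n + i - 1)! * (n - i)!) := by
  have hj : ∏ j ∈ Ioc i n, (j : K) = n ! / i ! := by
    simpa using prod_Ioc_natCast_add_sub (K := K) 0 0 (zero_le _) hin
  have hj1 : ∏ j ∈ Ioc i n, ((j : K) - 1) = (n - 1)! / (i - 1)! := by
    simpa using prod_Ioc_natCast_add_sub (K := K) 0 1 (by omega) hin
  have hji : ∏ j ∈ Ioc i n, ((j : K) + i - 1) = (n + i - 1)! / (2 * i - 1)! := by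
    have := prod_Ioc_natCast_add_sub (K := K) i 1 (by omega) hin
    rwa [show i + i - 1 = 2 * i - 1 by omega, Nat.cast_one] at this
  have hij : ∏ j ∈ Ioc i n, ((j : K) - i) = (n - i)! := by
    simpa using prod_Ioc_natCast_add_sub (K := K) 0 i (by omega) hin
  simp only [eigenRatio, prod_div_distrib, prod_mul_distrib]
  rw [hj, hj1, hji, hij]
  field_simp

end

/-- For integers `n ≥ 4` and `3 ≤ i ≤ n-1`,
`∏_{j=3, j≠i}^{n} j(j-1)/((j+i-1)(j-i))
  = (-1)^{i-1} (2i-1)(i+1)(i-2)(n!)² / (2n (n-i)! (n+i-1)!)`. -/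
theorem prod_eigen_ratio_eq (n i : ℕ) (hn : 4 ≤ n) (hi : 3 ≤ i) (hin : i ≤ n - 1) :
    ∏ j ∈ (Finset.Icc 3 n).erase i,
        ((j : ℚ) * ((j : ℚ) - 1)) / (((j : ℚ) + (i : ℚ) - 1) * ((j : ℚ) - (i : ℚ)))
      = (-1 : ℚ) ^ (i - 1)
          * ((2 * (i : ℚ) - 1) * ((i : ℚ) + 1) * ((i : ℚ) - 2) * (Nat.factorial n : ℚ) ^ 2)
          / (2 * (n : ℚ) * (Nat.factorial (n - i) : ℚ) * (Nat.factorial (n + i - 1) : ℚ)) := by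
  have hsplit : (Icc 3 n).erase i = Ioc 2 (i - 1) ∪ Ioc i n := by
    ext j
    simp only [mem_erase, mem_Icc, mem_union, mem_Ioc]
    omega
  rw [hsplit, prod_union (Ioc_disjoint_Ioc_of_le (by omega))]
  show (∏ j ∈ _, (eigenRatio i j : ℚ)) * ∏ j ∈ _, (eigenRatio i j : ℚ) = _
  rw [prod_eigenRatio_Ioc_two_sub_one hi, prod_eigenRatio_Ioc_of_le (by omega) (by omega),
    natCast_factorial_eq_mul_factorial_pred (m := n) (by omega),
    natCast_factorial_eq_mul_factorial_pred (m := 2 * i - 1) (by omega),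
    show 2 * i - 1 - 1 = 2 * i - 2 by omega, Nat.cast_sub (by omega : 1 ≤ 2 * i)]
  field_simp
  push_cast
  ring

end RootedTreeChain
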